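/- arXiv:1912.04568 — 2 statements merged into one kernel-verified Lean document; each statement's English description precedes it below -/
import Mathlib

section
/- In the policy improvement algorithm for the minimization problem, the eigenvalues are nonincreasing: λ_{k+1} ≤ λ_k for every k ≥ 1. -/
open MeasureTheory Filter Topology Metric Set

noncomputable section

namespace RiskPIA

variable {d : ℕ} {𝕌 : Type*}

/-- Euclidean state space `ℝ^d`. -/
abbrev Euc (d : ℕ) := EuclideanSpace ℝ (Fin d)

/-- Hessian matrix of `u` at `x`, via the second iterated Fréchet derivative. -/
def hess (u : Euc d → ℝ) (x : Euc d) : Matrix (Fin d) (Fin d) ℝ :=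
  Matrix.of fun i j =>
    iteratedFDeriv ℝ 2 u x ![EuclideanSpace.single i 1, EuclideanSpace.single j 1]

/-- The diffusion matrix `a := ½ σ σᵀ`. -/
def matA (σ : Euc d → Matrix (Fin d) (Fin d) ℝ) (x : Euc d) : Matrix (Fin d) (Fin d) ℝ :=
  (2:ℝ)⁻¹ • (σ x * (σ x).transpose)

/-- Linear second order operator with diffusion matrix `a` and drift `bv`:
`L f = tr(a ∇²f) + bv·∇f`. -/
def linOp (a : Euc d → Matrix (Fin d) (Fin d) ℝ) (bv : Euc d → Euc d)
    (f : Euc d → ℝ) (x : Euc d) : ℝ :=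
  (a x * hess f x).trace + ∑ i, bv x i * gradient f x i

/-- Controlled generator `A u (x,ζ) = tr(a(x) ∇²u(x)) + b(x,ζ)·∇u(x)`. -/
def genA (a : Euc d → Matrix (Fin d) (Fin d) ℝ) (b : Euc d → 𝕌 → Euc d)
    (u : Euc d → ℝ) (x : Euc d) (ζ : 𝕌) : ℝ :=
  (a x * hess u x).trace + ∑ i, b x ζ i * gradient u x i

/-- `A^c u = A u + c u`. -/
def genAc (a : Euc d → Matrix (Fin d) (Fin d) ℝ) (b : Euc d → 𝕌 → Euc d)
    (c : Euc d → 𝕌 → ℝ) (u : Euc d → ℝ) (x : Euc d) (ζ : 𝕌) : ℝ :=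
  genA a b u x ζ + c x ζ * u x

/-- First order term `b(x,ζ)·∇u(x) + c(x,ζ) u(x)`. -/
def drvTerm (b : Euc d → 𝕌 → Euc d) (c : Euc d → 𝕌 → ℝ) (u : Euc d → ℝ)
    (x : Euc d) (ζ : 𝕌) : ℝ :=
  (∑ i, b x ζ i * gradient u x i) + c x ζ * u x

/-- Generalized principal eigenvalue of the linear operator
`ψ ↦ tr(a∇²ψ) + bv·∇ψ + cv ψ` on `ℝ^d`. -/
def principalEig (a : Euc d → Matrix (Fin d) (Fin d) ℝ) (bv : Euc d → Euc d)
    (cv : Euc d → ℝ) : ℝ :=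
  sInf {l : ℝ | ∃ ψ : Euc d → ℝ, ContDiff ℝ 2 ψ ∧ (∀ x, 0 < ψ x) ∧
    ∀ x, linOp a bv ψ x + cv x * ψ x ≤ l * ψ x}

/-- the set of admissible `λ` for the semilinear (minimizing) operator `G`. -/
def lamGSet (a : Euc d → Matrix (Fin d) (Fin d) ℝ) (b : Euc d → 𝕌 → Euc d)
    (c : Euc d → 𝕌 → ℝ) : Set ℝ :=
  {l : ℝ | ∃ ψ : Euc d → ℝ, ContDiff ℝ 2 ψ ∧ (∀ x, 0 < ψ x) ∧
    ∀ x, (a x * hess ψ x).trace + (⨅ ζ, drvTerm b c ψ x ζ) ≤ l * ψ x}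

/-- Generalized principal eigenvalue `λ*(G)` of the semilinear minimizing operator. -/
def lamG (a : Euc d → Matrix (Fin d) (Fin d) ℝ) (b : Euc d → 𝕌 → Euc d)
    (c : Euc d → 𝕌 → ℝ) : ℝ :=
  sInf (lamGSet a b c)

/-- the set of admissible `λ` for the maximal operator. -/
def rhoStarSet (a : Euc d → Matrix (Fin d) (Fin d) ℝ) (b : Euc d → 𝕌 → Euc d)
    (c : Euc d → 𝕌 → ℝ) : Set ℝ :=
  {l : ℝ | ∃ ψ : Euc d → ℝ, ContDiff ℝ 2 ψ ∧ (∀ x, 0 < ψ x) ∧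
    ∀ x ζ, genAc a b c ψ x ζ ≤ l * ψ x}

/-- Principal eigenvalue `ϱ_*` of the maximal operator. -/
def rhoStar (a : Euc d → Matrix (Fin d) (Fin d) ℝ) (b : Euc d → 𝕌 → Euc d)
    (c : Euc d → 𝕌 → ℝ) : ℝ :=
  sInf (rhoStarSet a b c)

/-! ### Path space, controls, and the martingale problem -/

/-- Path space (trajectories). -/
abbrev Traj (d : ℕ) := ℝ → Euc d

/-- The canonical filtration on path space. -/
def trajFilt (d : ℕ) : Filtration ℝ (MeasurableSpace.pi : MeasurableSpace (Traj d)) where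
  seq t := ⨆ s ∈ Iic t, MeasurableSpace.comap (fun ω : Traj d => ω s) inferInstance
  mono' := fun _ _ hij => biSup_mono fun _ hs => hs.trans hij
  le' := fun _ => iSup₂_le fun s _ => Measurable.comap_le (measurable_pi_apply s)

section Stoch

variable [TopologicalSpace 𝕌] [MeasurableSpace 𝕌]

/-- `(U, P)` is an admissible control/weak-solution pair started at `x`,
in the sense of the controlled martingale problem for the generator `A`. -/
def IsCtrlSol (b : Euc d → 𝕌 → Euc d) (σ : Euc d → Matrix (Fin d) (Fin d) ℝ)
    (U : ℝ → Traj d → 𝕌) (P : Measure (Traj d)) (x : Euc d) : Prop :=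
  IsProbabilityMeasure P ∧ P {ω | ω 0 = x} = 1 ∧
  (∀ t : ℝ, Measurable[trajFilt d t] (U t)) ∧
  ∀ f : Euc d → ℝ, ContDiff ℝ 2 f → HasCompactSupport f →
    Martingale (fun t ω => f (ω t) -
      ∫ s in Ioc (0:ℝ) t, genA (matA σ) b f (ω s) (U s ω)) (trajFilt d) P

/-- The control process associated with a stationary Markov control `v`. -/
def mkv (v : Euc d → 𝕌) : ℝ → Traj d → 𝕌 := fun t ω => v (ω t)

/-- The risk-sensitive ergodic cost of the admissible pair `(U,P)`:
`limsup_{T→∞} T⁻¹ log E[exp ∫₀ᵀ c(X_s,U_s) ds]`. -/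
def riskVal (c : Euc d → 𝕌 → ℝ) (U : ℝ → Traj d → 𝕌) (P : Measure (Traj d)) : ℝ :=
  limsup (fun T : ℝ =>
    T⁻¹ * Real.log
      (∫⁻ ω, ENNReal.ofReal (Real.exp (∫ s in Ioc (0:ℝ) T, c (ω s) (U s ω))) ∂P).toReal)
    atTop

/-- The set of achievable risk-sensitive values over all starting points and
admissible controls. -/
def riskSet (b : Euc d → 𝕌 → Euc d) (σ : Euc d → Matrix (Fin d) (Fin d) ℝ)
    (c : Euc d → 𝕌 → ℝ) : Set ℝ :=
  {r | ∃ x U P, IsCtrlSol b σ U P x ∧ r = riskVal c U P}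

/-- `E_* = inf_x inf_U E_x(c,U)`. -/
def minRisk (b : Euc d → 𝕌 → Euc d) (σ : Euc d → Matrix (Fin d) (Fin d) ℝ)
    (c : Euc d → 𝕌 → ℝ) : ℝ := sInf (riskSet b σ c)

/-- `E^* = sup_x sup_U E_x(c,U)`. -/
def maxRisk (b : Euc d → 𝕌 → Euc d) (σ : Euc d → Matrix (Fin d) (Fin d) ℝ)
    (c : Euc d → 𝕌 → ℝ) : ℝ := sSup (riskSet b σ c)

/-- A stationary Markov control `v` is optimal (for the minimization problem). -/
def IsOptimalMin (b : Euc d → 𝕌 → Euc d) (σ : Euc d → Matrix (Fin d) (Fin d) ℝ)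
    (c : Euc d → 𝕌 → ℝ) (v : Euc d → 𝕌) : Prop :=
  ∀ x P, IsCtrlSol b σ (mkv v) P x → riskVal c (mkv v) P = minRisk b σ c

/-- A stationary Markov control `v` is optimal (for the maximization problem). -/
def IsOptimalMax (b : Euc d → 𝕌 → Euc d) (σ : Euc d → Matrix (Fin d) (Fin d) ℝ)
    (c : Euc d → 𝕌 → ℝ) (v : Euc d → 𝕌) : Prop :=
  ∀ x P, IsCtrlSol b σ (mkv v) P x → riskVal c (mkv v) P = maxRisk b σ c

/-- `P` solves the (uncontrolled) martingale problem with drift `bv`,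
diffusion matrix `matA σ`, and initial point `x`. -/
def IsDiffSol (bv : Euc d → Euc d) (σ : Euc d → Matrix (Fin d) (Fin d) ℝ)
    (P : Measure (Traj d)) (x : Euc d) : Prop :=
  IsProbabilityMeasure P ∧ P {ω | ω 0 = x} = 1 ∧
  ∀ f : Euc d → ℝ, ContDiff ℝ 2 f → HasCompactSupport f →
    Martingale (fun t ω => f (ω t) -
      ∫ s in Ioc (0:ℝ) t, linOp (matA σ) bv f (ω s)) (trajFilt d) P

end Stoch

/-- Infinitesimal invariance of a probability measure for the diffusion with
drift `bv` and diffusion matrix `a`. -/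
def InvariantFor (a : Euc d → Matrix (Fin d) (Fin d) ℝ) (bv : Euc d → Euc d)
    (μ : Measure (Euc d)) : Prop :=
  ∀ f : Euc d → ℝ, ContDiff ℝ 2 f → HasCompactSupport f → ∫ x, linOp a bv f x ∂μ = 0

/-- drift of the twisted (ground state) process: `bv + 2 a ∇ log V`. -/
def twistDrift (a : Euc d → Matrix (Fin d) (Fin d) ℝ) (bv : Euc d → Euc d)
    (V : Euc d → ℝ) : Euc d → Euc d :=
  fun x => bv x + (2:ℝ) •
    (EuclideanSpace.equiv (Fin d) ℝ).symm
      ((a x).mulVec fun i => gradient (fun y => Real.log (V y)) x i)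

/-- Frobenius norm of a matrix. -/
def matNorm (M : Matrix (Fin d) (Fin d) ℝ) : ℝ := Real.sqrt (∑ i, ∑ j, (M i j) ^ 2)

/-- Total variation distance between two (finite) measures. -/
def tvDist (μ ν : Measure (Euc d)) : ℝ :=
  ⨆ s : {s : Set (Euc d) // MeasurableSet s}, |(μ s).toReal - (ν s).toReal|

/-- A family of measures on `ℝ^d` is tight. -/
def TightFam {ι : Sort*} (μ : ι → Measure (Euc d)) : Prop :=
  ∀ ε : ℝ, 0 < ε → ∃ K : Set (Euc d), IsCompact K ∧ ∀ i, μ i Kᶜ ≤ ENNReal.ofReal ε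

/-- A function is inf-compact if its sublevel sets are compact (or empty). -/
def InfCompact (ℓ : Euc d → ℝ) : Prop := ∀ κ : ℝ, IsCompact {x | ℓ x ≤ κ}

/-- The first hitting time of the open ball of radius `r` (the exit time from
`B_r^c`), `τ̆_r`. -/
def hitTime (r : ℝ) (ω : Traj d) : ℝ := sInf {t : ℝ | 0 < t ∧ ω t ∈ ball (0 : Euc d) r}

/-- The trajectory hits the open ball of radius `r` at a positive time. -/
def Hits (r : ℝ) (ω : Traj d) : Prop := ∃ t : ℝ, 0 < t ∧ ω t ∈ ball (0 : Euc d) r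

/-! ### Standing hypotheses -/

/-- (A1): local Lipschitz continuity of `b`, and `σ` bounded and globally Lipschitz. -/
def HypA1 (b : Euc d → 𝕌 → Euc d) (σ : Euc d → Matrix (Fin d) (Fin d) ℝ) : Prop :=
  (∀ R : ℝ, 0 < R → ∃ C : ℝ, 0 < C ∧ ∀ ζ : 𝕌, ∀ x ∈ ball (0 : Euc d) R,
      ∀ y ∈ ball (0 : Euc d) R, ‖b x ζ - b y ζ‖ ≤ C * ‖x - y‖) ∧
  (∃ M : ℝ, ∀ x, matNorm (σ x) ≤ M) ∧
  (∃ L : ℝ, ∀ x y, matNorm (σ x - σ y) ≤ L * ‖x - y‖)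

/-- (A2): affine growth of the drift. -/
def HypA2 (b : Euc d → 𝕌 → Euc d) : Prop :=
  ∃ C : ℝ, 0 < C ∧ ∀ x ζ, ‖b x ζ‖ ≤ C * (1 + ‖x‖)

/-- (A3): uniform ellipticity of `a = ½σσᵀ`. -/
def HypA3 (σ : Euc d → Matrix (Fin d) (Fin d) ℝ) : Prop :=
  ∃ C : ℝ, 0 < C ∧ ∀ x (η : Euc d), C * ‖η‖ ^ 2 ≤ ∑ i, ∑ j, matA σ x i j * η i * η j

/-- (A4): the running cost is continuous, locally Lipschitz in `x` uniformly in `ζ`,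
with at most quadratic growth. -/
def HypA4 [TopologicalSpace 𝕌] (c : Euc d → 𝕌 → ℝ) : Prop :=
  Continuous (Function.uncurry c) ∧
  (∀ R : ℝ, 0 < R → ∃ C : ℝ, 0 < C ∧ ∀ ζ : 𝕌, ∀ x ∈ ball (0 : Euc d) R,
      ∀ y ∈ ball (0 : Euc d) R, |c x ζ - c y ζ| ≤ C * ‖x - y‖) ∧
  (∃ C : ℝ, 0 < C ∧ ∀ x ζ, |c x ζ| ≤ C * (1 + ‖x‖ ^ 2))

/-- The Foster–Lyapunov inequality of Assumption 2.1 for a given Lyapunov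
function `VL`. -/
def LyapIneq [TopologicalSpace 𝕌] (b : Euc d → 𝕌 → Euc d)
    (σ : Euc d → Matrix (Fin d) (Fin d) ℝ) (c : Euc d → 𝕌 → ℝ)
    (VL : Euc d → ℝ) : Prop :=
  ∃ Chat : ℝ, 0 < Chat ∧ ∃ K : Set (Euc d), IsCompact K ∧
    ((∃ M γ : ℝ, 0 ≤ M ∧ M < γ ∧ (∀ x ζ, c x ζ ≤ M) ∧
        (∀ ε : ℝ, 0 < ε → ∃ x ζ, c x ζ < ε) ∧
        ∀ x ζ, genA (matA σ) b VL x ζ ≤ Chat * K.indicator (fun _ => (1:ℝ)) x - γ * VL x) ∨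
      (∃ ℓ : Euc d → ℝ, InfCompact ℓ ∧ InfCompact (fun x => ℓ x - ⨆ ζ, c x ζ) ∧
        ∀ x ζ, genA (matA σ) b VL x ζ ≤ Chat * K.indicator (fun _ => (1:ℝ)) x - ℓ x * VL x))

/-- Assumption 2.1 (Foster–Lyapunov): `c ≥ 0` and there is a `C²` Lyapunov
function `VL ≥ 1` satisfying the Foster–Lyapunov inequality. -/
def Assumption21 [TopologicalSpace 𝕌] (b : Euc d → 𝕌 → Euc d)
    (σ : Euc d → Matrix (Fin d) (Fin d) ℝ) (c : Euc d → 𝕌 → ℝ) : Prop :=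
  (∀ x ζ, 0 ≤ c x ζ) ∧
  ∃ VL : Euc d → ℝ, ContDiff ℝ 2 VL ∧ (∀ x, 1 ≤ VL x) ∧ LyapIneq b σ c VL

section Stoch2

variable [TopologicalSpace 𝕌] [MeasurableSpace 𝕌]

/-- Assumption 2.2 (near-monotonicity at the maximal value `E^*`, which is finite). -/
def Assumption22 (b : Euc d → 𝕌 → Euc d) (σ : Euc d → Matrix (Fin d) (Fin d) ℝ)
    (c : Euc d → 𝕌 → ℝ) : Prop :=
  (riskSet b σ c).Nonempty ∧ BddAbove (riskSet b σ c) ∧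
  ∃ m : ℝ, m < maxRisk b σ c ∧ ∃ r₀ : ℝ, 0 < r₀ ∧
    ∀ (x : Euc d) (ζ : 𝕌), r₀ ≤ ‖x‖ → c x ζ ≤ m

end Stoch2

/-- `v` is an a.e. minimizing selector for `ζ ↦ b(x,ζ)·∇u(x) + c(x,ζ)u(x)`. -/
def IsMinSelector (b : Euc d → 𝕌 → Euc d) (c : Euc d → 𝕌 → ℝ) (u : Euc d → ℝ)
    (v : Euc d → 𝕌) : Prop :=
  ∀ᵐ x ∂(volume : Measure (Euc d)), ∀ ζ, drvTerm b c u x (v x) ≤ drvTerm b c u x ζ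

/-- `v` is an a.e. maximizing selector for `ζ ↦ b(x,ζ)·∇u(x) + c(x,ζ)u(x)`. -/
def IsMaxSelector (b : Euc d → 𝕌 → Euc d) (c : Euc d → 𝕌 → ℝ) (u : Euc d → ℝ)
    (v : Euc d → 𝕌) : Prop :=
  ∀ᵐ x ∂(volume : Measure (Euc d)), ∀ ζ, drvTerm b c u x ζ ≤ drvTerm b c u x (v x)

section PIA

variable [TopologicalSpace 𝕌] [MeasurableSpace 𝕌]

/-- The policy improvement algorithm (minimization): `v k` are the Markov
controls, `V k` the principal eigenfunctions, `lam k` the principal eigenvalues. -/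
def PIAmin (b : Euc d → 𝕌 → Euc d) (σ : Euc d → Matrix (Fin d) (Fin d) ℝ)
    (c : Euc d → 𝕌 → ℝ) (v : ℕ → Euc d → 𝕌) (V : ℕ → Euc d → ℝ)
    (lam : ℕ → ℝ) : Prop :=
  (∀ k, Measurable (v k)) ∧
  (∀ k, ContDiff ℝ 2 (V k) ∧ (∀ x, 0 < V k x) ∧ V k 0 = 1 ∧
    lam k = principalEig (matA σ) (fun x => b x (v k x)) (fun x => c x (v k x)) ∧
    ∀ x, genAc (matA σ) b c (V k) x (v k x) = lam k * V k x) ∧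
  (∀ k x ζ, drvTerm b c (V k) x (v (k+1) x) ≤ drvTerm b c (V k) x ζ)

/-- The policy improvement algorithm (maximization). -/
def PIAmax (b : Euc d → 𝕌 → Euc d) (σ : Euc d → Matrix (Fin d) (Fin d) ℝ)
    (c : Euc d → 𝕌 → ℝ) (v : ℕ → Euc d → 𝕌) (V : ℕ → Euc d → ℝ)
    (lam : ℕ → ℝ) : Prop :=
  (∀ k, Measurable (v k)) ∧
  (∀ k, ContDiff ℝ 2 (V k) ∧ (∀ x, 0 < V k x) ∧ V k 0 = 1 ∧
    lam k = principalEig (matA σ) (fun x => b x (v k x)) (fun x => c x (v k x)) ∧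
    ∀ x, genAc (matA σ) b c (V k) x (v k x) = lam k * V k x) ∧
  (∀ k x ζ, drvTerm b c (V k) x ζ ≤ drvTerm b c (V k) x (v (k+1) x))

end PIA

/-! ### Hypotheses (B1)–(B4) of Section 5 -/

/-- (B1): continuity and local Lipschitz continuity of `b` and `σ`. -/
def HypB1 [TopologicalSpace 𝕌] (b : Euc d → 𝕌 → Euc d)
    (σ : Euc d → Matrix (Fin d) (Fin d) ℝ) : Prop :=
  Continuous (Function.uncurry b) ∧ Continuous σ ∧
  ∀ R : ℝ, 0 < R → ∃ C : ℝ, 0 < C ∧ ∀ x ∈ ball (0 : Euc d) R, ∀ y ∈ ball (0 : Euc d) R,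
    (∀ ζ : 𝕌, ‖b x ζ - b y ζ‖ ≤ C * ‖x - y‖) ∧ matNorm (σ x - σ y) ≤ C * ‖x - y‖

/-- (B2): one-sided affine-quadratic growth. -/
def HypB2 (b : Euc d → 𝕌 → Euc d) (σ : Euc d → Matrix (Fin d) (Fin d) ℝ) : Prop :=
  ∃ C : ℝ, 0 < C ∧ ∀ x ζ,
    max (inner ℝ (b x ζ) x : ℝ) 0 + matNorm (σ x) ^ 2 ≤ C * (1 + ‖x‖ ^ 2)

/-- (B3): local uniform ellipticity. -/
def HypB3 (σ : Euc d → Matrix (Fin d) (Fin d) ℝ) : Prop :=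
  ∀ R : ℝ, 0 < R → ∃ δ : ℝ, 0 < δ ∧ ∀ x ∈ ball (0 : Euc d) R, ∀ η : Euc d,
    δ * ‖η‖ ^ 2 ≤ ∑ i, ∑ j, matA σ x i j * η i * η j

/-- (B4): the running cost is continuous, bounded below, and locally Lipschitz
in `x` uniformly in `ζ`. -/
def HypB4 [TopologicalSpace 𝕌] (c : Euc d → 𝕌 → ℝ) : Prop :=
  Continuous (Function.uncurry c) ∧
  (∃ m : ℝ, ∀ x ζ, m ≤ c x ζ) ∧
  ∀ R : ℝ, 0 < R → ∃ C : ℝ, 0 < C ∧ ∀ ζ : 𝕌, ∀ x ∈ ball (0 : Euc d) R,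
    ∀ y ∈ ball (0 : Euc d) R, |c x ζ - c y ζ| ≤ C * ‖x - y‖

/-- Strict monotonicity on the right of the semilinear principal eigenvalue at `c`. -/
def StrictRightMono (a : Euc d → Matrix (Fin d) (Fin d) ℝ) (b : Euc d → 𝕌 → Euc d)
    (c : Euc d → 𝕌 → ℝ) : Prop :=
  ∀ h : Euc d → ℝ, (∀ x, 0 ≤ h x) → h ≠ 0 →
    lamG a b c < lamG a b fun x ζ => c x ζ + h x


section Sec5

variable [TopologicalSpace 𝕌] [MeasurableSpace 𝕌]

/-- The set of normalized principal eigenfunctions of `A^c_v` over all stationary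
Markov controls `v` whose principal eigenvalue does not exceed `ρ`. -/
def PsiSet (b : Euc d → 𝕌 → Euc d) (σ : Euc d → Matrix (Fin d) (Fin d) ℝ)
    (c : Euc d → 𝕌 → ℝ) (ρ : ℝ) : Set (Euc d → ℝ) :=
  {W | ∃ vv : Euc d → 𝕌, Measurable vv ∧
    principalEig (matA σ) (fun x => b x (vv x)) (fun x => c x (vv x)) ≤ ρ ∧
    ContDiff ℝ 2 W ∧ (∀ x, 0 < W x) ∧ W 0 = 1 ∧
    ∀ x, linOp (matA σ) (fun y => b y (vv y)) W x + c x (vv x) * W x =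
      principalEig (matA σ) (fun x => b x (vv x)) (fun x => c x (vv x)) * W x}

/-- The class `M_*` of invariant probability measures of the ground state
processes associated to minimizing selectors (w.r.t. the eigenfunction `Ψ`). -/
def GroundInvMeasures (b : Euc d → 𝕌 → Euc d) (σ : Euc d → Matrix (Fin d) (Fin d) ℝ)
    (c : Euc d → 𝕌 → ℝ) (Ψ : Euc d → ℝ) : Set (Measure (Euc d)) :=
  {μ | ∃ vv : Euc d → 𝕌, Measurable vv ∧ IsMinSelector b c Ψ vv ∧
    IsProbabilityMeasure μ ∧
    InvariantFor (matA σ) (twistDrift (matA σ) (fun x => b x (vv x)) Ψ) μ}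

/-- Assumption 5.1. -/
def Assumption51 (b : Euc d → 𝕌 → Euc d) (σ : Euc d → Matrix (Fin d) (Fin d) ℝ)
    (c : Euc d → 𝕌 → ℝ) (Ψ : Euc d → ℝ) : Prop :=
  StrictRightMono (matA σ) b c ∧ (GroundInvMeasures b σ c Ψ).Nonempty

/-- Property A of Definition 5.2. -/
def PropertyA (b : Euc d → 𝕌 → Euc d) (σ : Euc d → Matrix (Fin d) (Fin d) ℝ)
    (c : Euc d → 𝕌 → ℝ) (Ψ : Euc d → ℝ) (ρ : ℝ) : Prop :=
  ∃ μ ∈ GroundInvMeasures b σ c Ψ,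
    Integrable (fun x => ⨆ W : PsiSet b σ c ρ, (W : Euc d → ℝ) x / Ψ x) μ

/-- Property B of Definition 5.2: the ground state diffusions corresponding to
controls with eigenvalue `≤ ρ` are positive recurrent (have invariant probability
measures) and the family of such invariant measures is tight. -/
def PropertyB (b : Euc d → 𝕌 → Euc d) (σ : Euc d → Matrix (Fin d) (Fin d) ℝ)
    (c : Euc d → 𝕌 → ℝ) (Ψ : Euc d → ℝ) (ρ : ℝ) : Prop :=
  (∀ vv : Euc d → 𝕌, Measurable vv →
    principalEig (matA σ) (fun x => b x (vv x)) (fun x => c x (vv x)) ≤ ρ →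
    ∃ μ : Measure (Euc d), IsProbabilityMeasure μ ∧
      InvariantFor (matA σ) (twistDrift (matA σ) (fun x => b x (vv x)) Ψ) μ) ∧
  ∀ ε : ℝ, 0 < ε → ∃ K : Set (Euc d), IsCompact K ∧
    ∀ (vv : Euc d → 𝕌) (μ : Measure (Euc d)), Measurable vv →
      principalEig (matA σ) (fun x => b x (vv x)) (fun x => c x (vv x)) ≤ ρ →
      IsProbabilityMeasure μ →
      InvariantFor (matA σ) (twistDrift (matA σ) (fun x => b x (vv x)) Ψ) μ →
      μ Kᶜ ≤ ENNReal.ofReal ε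

end Sec5

/-! ### Auxiliary material for the proof of `statement_1` -/

section AuxProof

open RealInnerProductSpace

/-- cubic plus function `u ↦ ((1-u)⁺)³`. -/
noncomputable def gcub (u : ℝ) : ℝ := max (1 - u) 0 ^ 3
noncomputable def gcub' (u : ℝ) : ℝ := -3 * max (1 - u) 0 ^ 2
noncomputable def gcub'' (u : ℝ) : ℝ := 6 * max (1 - u) 0

lemma max_eventually_lt {u : ℝ} (h : u < 1) : ∀ᶠ v in 𝓝 u, max (1 - v) 0 = 1 - v := by
  filter_upwards [eventually_lt_nhds h] with v hv
  exact max_eq_left (by linarith)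

lemma max_eventually_gt {u : ℝ} (h : 1 < u) : ∀ᶠ v in 𝓝 u, max (1 - v) 0 = 0 := by
  filter_upwards [eventually_gt_nhds h] with v hv
  exact max_eq_right (by linarith)

lemma abs_ev {c : ℝ} (hc : 0 < c) : ∀ᶠ v : ℝ in 𝓝 1, |v - 1| ≤ c := by
  have : Filter.Tendsto (fun v : ℝ => |v - 1|) (𝓝 1) (𝓝 |1 - 1|) :=
    ((continuous_id.sub continuous_const).abs.tendsto (1:ℝ))
  simp only [sub_self, abs_zero] at this
  exact this.eventually_le_const hc

lemma hasDerivAt_gcub (u : ℝ) : HasDerivAt gcub (gcub' u) u := by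
  rcases lt_trichotomy u 1 with h | h | h
  · have h1 : HasDerivAt (fun v : ℝ => (1 - v) ^ 3) (-3 * (1 - u)^2) u := by
      have := ((hasDerivAt_id u).const_sub 1).pow 3
      refine this.congr_deriv ?_
      simp only [id]; ring
    have h2 : gcub =ᶠ[𝓝 u] (fun v : ℝ => (1 - v) ^ 3) := by
      filter_upwards [max_eventually_lt h] with v hv
      simp [gcub, hv]
    rw [show gcub' u = -3 * (1-u)^2 by simp [gcub', max_eq_left (by linarith : (0:ℝ) ≤ 1 - u)]]
    exact h1.congr_of_eventuallyEq h2
  · subst h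
    have h0 : gcub' 1 = 0 := by simp [gcub']
    rw [h0, hasDerivAt_iff_isLittleO, Asymptotics.isLittleO_iff]
    intro c hc
    filter_upwards [abs_ev (Real.sqrt_pos.mpr hc)] with v hv
    have h1 : max (1 - v) 0 ≤ |v - 1| := by
      rcases le_total v 1 with h' | h'
      · rw [max_eq_left (by linarith), abs_of_nonpos (by linarith)]; linarith
      · rw [max_eq_right (by linarith)]; positivity
    have h2 : (0:ℝ) ≤ max (1 - v) 0 := le_max_right _ _
    have h3 : |v - 1| ^ 2 ≤ c := by
      have := Real.sq_sqrt hc.le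
      nlinarith [abs_nonneg (v - 1)]
    simp only [gcub, show max (1 - (1:ℝ)) 0 = 0 by simp, smul_eq_mul]
    have e : max (1 - v) 0 ^ 3 - 0 ^ 3 - (v - 1) * 0 = max (1-v) 0 ^ 3 := by ring
    rw [Real.norm_eq_abs, Real.norm_eq_abs, e, abs_of_nonneg (by positivity)]
    calc max (1 - v) 0 ^ 3 ≤ |v - 1| ^ 3 := pow_le_pow_left₀ h2 h1 3
    _ = |v - 1|^2 * |v-1| := by ring
    _ ≤ c * |v - 1| := by nlinarith [abs_nonneg (v-1)]
  · have h2 : gcub =ᶠ[𝓝 u] (fun _ : ℝ => (0:ℝ)) := by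
      filter_upwards [max_eventually_gt h] with v hv
      simp [gcub, hv]
    rw [show gcub' u = 0 by simp [gcub', max_eq_right (by linarith : 1 - u ≤ (0:ℝ))]]
    exact (hasDerivAt_const u 0).congr_of_eventuallyEq h2

lemma hasDerivAt_gcub' (u : ℝ) : HasDerivAt gcub' (gcub'' u) u := by
  rcases lt_trichotomy u 1 with h | h | h
  · have h1 : HasDerivAt (fun v : ℝ => -3 * (1 - v) ^ 2) (6 * (1 - u)) u := by
      have := (((hasDerivAt_id u).const_sub 1).pow 2).const_mul (-3 : ℝ)
      refine this.congr_deriv ?_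
      simp only [id]; ring
    have h2 : gcub' =ᶠ[𝓝 u] (fun v : ℝ => -3 * (1 - v) ^ 2) := by
      filter_upwards [max_eventually_lt h] with v hv
      simp [gcub', hv]
    rw [show gcub'' u = 6 * (1-u) by simp [gcub'', max_eq_left (by linarith : (0:ℝ) ≤ 1 - u)]]
    exact h1.congr_of_eventuallyEq h2
  · subst h
    have h0 : gcub'' 1 = 0 := by simp [gcub'']
    rw [h0, hasDerivAt_iff_isLittleO, Asymptotics.isLittleO_iff]
    intro c hc
    filter_upwards [abs_ev (show (0:ℝ) < c/3 by linarith)] with v hv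
    have h1 : max (1 - v) 0 ≤ |v - 1| := by
      rcases le_total v 1 with h' | h'
      · rw [max_eq_left (by linarith), abs_of_nonpos (by linarith)]; linarith
      · rw [max_eq_right (by linarith)]; positivity
    have h2 : (0:ℝ) ≤ max (1 - v) 0 := le_max_right _ _
    simp only [gcub', show max (1 - (1:ℝ)) 0 = 0 by simp, smul_eq_mul]
    rw [Real.norm_eq_abs, Real.norm_eq_abs]
    rw [abs_of_nonpos (by nlinarith : -3 * max (1 - v) 0 ^ 2 - -3 * 0 ^ 2 - (v - 1) * 0 ≤ 0)]
    nlinarith [abs_nonneg (v - 1)]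
  · have h2 : gcub' =ᶠ[𝓝 u] (fun _ : ℝ => (0:ℝ)) := by
      filter_upwards [max_eventually_gt h] with v hv
      simp [gcub', hv]
    rw [show gcub'' u = 0 by simp [gcub'', max_eq_right (by linarith : 1 - u ≤ (0:ℝ))]]
    exact (hasDerivAt_const u 0).congr_of_eventuallyEq h2

lemma deriv_gcub : deriv gcub = gcub' := funext fun u => (hasDerivAt_gcub u).deriv

lemma deriv_gcub' : deriv gcub' = gcub'' := funext fun u => (hasDerivAt_gcub' u).deriv

lemma contDiff_gcub : ContDiff ℝ 2 gcub := by
  rw [show (2 : WithTop ℕ∞) = 1 + 1 from rfl, contDiff_succ_iff_deriv]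
  refine ⟨fun u => (hasDerivAt_gcub u).differentiableAt, by simp, ?_⟩
  rw [deriv_gcub, show (1 : WithTop ℕ∞) = 0 + 1 from rfl, contDiff_succ_iff_deriv]
  refine ⟨fun u => (hasDerivAt_gcub' u).differentiableAt, by simp, ?_⟩
  rw [deriv_gcub', contDiff_zero]
  exact continuous_const.mul ((continuous_const.sub continuous_id).max continuous_const)

variable {d : ℕ}

/-- squared norm on `Euc d`. -/
noncomputable def qsq (x : Euc d) : ℝ := ⟪x, x⟫

lemma qsq_nonneg (x : Euc d) : 0 ≤ qsq x := real_inner_self_nonneg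

lemma qsq_eq_norm (x : Euc d) : qsq x = ‖x‖ ^ 2 := real_inner_self_eq_norm_sq x

/-- the real inner product as a continuous bilinear map. -/
noncomputable def innF : Euc d →L[ℝ] Euc d →L[ℝ] ℝ :=
  (isBoundedBilinearMap_inner (𝕜 := ℝ) (E := Euc d)).toContinuousLinearMap

lemma innF_apply (x y : Euc d) : innF x y = ⟪x, y⟫ := rfl

lemma hasFDerivAt_qsq (x : Euc d) : HasFDerivAt qsq ((2:ℝ) • (innF x)) x := by
  have h := (hasFDerivAt_id x).inner ℝ (hasFDerivAt_id x)
  refine h.congr_fderiv ?_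
  ext h'
  simp only [fderivInnerCLM_apply, ContinuousLinearMap.smul_apply, innF_apply,
    ContinuousLinearMap.comp_apply, ContinuousLinearMap.prod_apply, ContinuousLinearMap.coe_id',
    id_eq, smul_eq_mul]
  rw [real_inner_comm x h']
  ring

lemma contDiff_qsq : ContDiff ℝ 2 (qsq (d := d)) := contDiff_id.inner ℝ contDiff_id

/-- the compactly supported bump `chi = gcub ∘ qsq`. -/
noncomputable def chi (x : Euc d) : ℝ := gcub (qsq x)

lemma chi_nonneg (x : Euc d) : 0 ≤ chi x := by
  have : (0:ℝ) ≤ max (1 - qsq x) 0 := le_max_right _ _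
  simpa [chi, gcub] using pow_nonneg this 3

lemma chi_zero : chi (0 : Euc d) = 1 := by
  simp [chi, qsq, gcub]

lemma contDiff_chi : ContDiff ℝ 2 (chi (d := d)) := contDiff_gcub.comp contDiff_qsq

lemma hasFDerivAt_chi (x : Euc d) :
    HasFDerivAt chi ((2 * gcub' (qsq x)) • innF x) x := by
  have h := (hasDerivAt_gcub (qsq x)).comp_hasFDerivAt x (hasFDerivAt_qsq x)
  rw [show (2 * gcub' (qsq x)) • innF x = gcub' (qsq x) • (2:ℝ) • innF x by
    rw [smul_smul]; ring_nf]
  exact h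

lemma fderiv_chi : fderiv ℝ (chi (d := d)) = fun x => (2 * gcub' (qsq x)) • innF x :=
  funext fun x => (hasFDerivAt_chi x).fderiv

lemma hasFDerivAt_fderiv_chi (x : Euc d) :
    HasFDerivAt (fderiv ℝ (chi (d := d)))
      ((2 * gcub' (qsq x)) • innF +
        ((2 * gcub'' (qsq x)) • ((2:ℝ) • innF x)).smulRight (innF x)) x := by
  rw [fderiv_chi]
  have hc : HasFDerivAt (fun y : Euc d => 2 * gcub' (qsq y))
      ((2 * gcub'' (qsq x)) • ((2:ℝ) • innF x)) x := by
    have h1 : HasDerivAt (fun t : ℝ => 2 * gcub' t) (2 * gcub'' (qsq x)) (qsq x) :=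
      (hasDerivAt_gcub' (qsq x)).const_mul 2
    exact h1.comp_hasFDerivAt x (hasFDerivAt_qsq x)
  have hl : HasFDerivAt (fun y : Euc d => innF y) (innF (d := d)) x :=
    innF.hasFDerivAt
  exact hc.smul hl

/-- coordinates of the gradient of a differentiable function. -/
lemma gradient_coord {f : Euc d → ℝ} {L : Euc d →L[ℝ] ℝ} {x : Euc d}
    (h : HasFDerivAt f L x) (i : Fin d) :
    gradient f x i = L (EuclideanSpace.single i 1) := by
  have h2 : HasGradientAt f (gradient f x) x := h.differentiableAt.hasGradientAt
  rw [hasGradientAt_iff_hasFDerivAt] at h2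
  rw [h.unique h2]
  rw [InnerProductSpace.toDual_apply_apply, EuclideanSpace.inner_single_right]
  simp

lemma grad_chi (x : Euc d) (i : Fin d) :
    gradient chi x i = 2 * gcub' (qsq x) * x i := by
  rw [gradient_coord (hasFDerivAt_chi x) i]
  rw [ContinuousLinearMap.smul_apply, innF_apply, EuclideanSpace.inner_single_right]
  simp

lemma hess_eq_fderiv_fderiv (f : Euc d → ℝ) (x : Euc d) (i j : Fin d) :
    hess f x i j = fderiv ℝ (fderiv ℝ f) x (EuclideanSpace.single i 1)
      (EuclideanSpace.single j 1) := by
  simp only [hess, Matrix.of_apply]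
  rw [iteratedFDeriv_two_apply]
  simp

lemma hess_chi (x : Euc d) (i j : Fin d) :
    hess chi x i j = (2 * gcub' (qsq x)) * (if i = j then 1 else 0)
      + 4 * gcub'' (qsq x) * (x i * x j) := by
  rw [hess_eq_fderiv_fderiv, (hasFDerivAt_fderiv_chi x).fderiv]
  simp only [ContinuousLinearMap.add_apply, ContinuousLinearMap.smul_apply,
    ContinuousLinearMap.smulRight_apply, innF_apply, smul_eq_mul]
  rw [EuclideanSpace.inner_single_right, EuclideanSpace.inner_single_right,
    EuclideanSpace.inner_single_right]
  simp only [EuclideanSpace.single_apply, map_one, one_mul, RCLike.star_def]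
  rw [show (starRingEnd ℝ) (x i) = x i from rfl, show (starRingEnd ℝ) (x j) = x j from rfl]
  by_cases hij : i = j <;> simp [hij, eq_comm] <;> ring

end AuxProof
section AuxProof2

open RealInnerProductSpace

variable {d : ℕ}

/-- Second derivative test: at a local maximum the Hessian quadratic form is nonpositive. -/
lemma secondDeriv_nonpos {f : Euc d → ℝ} (hf : ContDiff ℝ 2 f) {z : Euc d}
    (hmax : IsLocalMax f z) (u : Euc d) :
    fderiv ℝ (fderiv ℝ f) z u u ≤ 0 := by
  set L : ℝ → Euc d := fun t => z + t • u with hLdef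
  have hL0 : L 0 = z := by simp [hLdef]
  have hLd : ∀ t : ℝ, HasDerivAt L u t := by
    intro t
    have := ((hasDerivAt_id t).smul_const u).const_add z
    simpa [hLdef] using this
  have hLc : Continuous L := by
    exact continuous_const.add (continuous_id.smul continuous_const)
  have hfd : Differentiable ℝ f := hf.differentiable (by norm_num)
  have hfC1 : ContDiff ℝ 1 (fderiv ℝ f) := hf.fderiv_right (le_refl 2)
  have hfd2 : Differentiable ℝ (fderiv ℝ f) := hfC1.differentiable one_ne_zero
  set φ' : ℝ → ℝ := fun t => fderiv ℝ f (L t) u with hφ'def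
  have hφ : ∀ t : ℝ, HasDerivAt (fun s => f (L s)) (φ' t) t := fun t =>
    (hfd (L t)).hasFDerivAt.comp_hasDerivAt t (hLd t)
  have hD : HasDerivAt φ' (fderiv ℝ (fderiv ℝ f) z u u) 0 := by
    have h1 : HasDerivAt (fun t => fderiv ℝ f (L t)) (fderiv ℝ (fderiv ℝ f) z u) 0 := by
      have h := (hfd2 (L 0)).hasFDerivAt.comp_hasDerivAt 0 (hLd 0)
      rw [hL0] at h
      exact h
    have h2 := h1.clm_apply (hasDerivAt_const (0:ℝ) u)
    simpa using h2
  have hφmax : IsLocalMax (fun s => f (L s)) 0 := by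
    exact (hLc.tendsto 0).eventually (hL0 ▸ hmax)
  have hφ'0 : φ' 0 = 0 := by
    rw [hφ'def]
    simp [hL0, hmax.fderiv_eq_zero]
  by_contra hpos
  push_neg at hpos
  have hslope : Filter.Tendsto (slope φ' 0) (𝓝[≠] 0) (𝓝 (fderiv ℝ (fderiv ℝ f) z u u)) :=
    hasDerivAt_iff_tendsto_slope.mp hD
  have hsub : (𝓝[>] (0:ℝ)) ≤ 𝓝[≠] (0:ℝ) :=
    nhdsWithin_mono 0 (fun t ht => ne_of_gt ht)
  have h3 : ∀ᶠ t in 𝓝[>] (0:ℝ), 0 < slope φ' 0 t :=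
    (hslope.mono_left hsub).eventually (eventually_gt_nhds hpos)
  have h4 : ∀ᶠ t in 𝓝[>] (0:ℝ), 0 < φ' t := by
    filter_upwards [h3, self_mem_nhdsWithin] with t ht ht0
    have hs : slope φ' 0 t = φ' t / t := by
      simp [slope_def_field, hφ'0]
    rw [hs] at ht
    have ht0' : (0:ℝ) < t := ht0
    rcases div_pos_iff.mp ht with ⟨h, _⟩ | ⟨_, h2⟩
    · exact h
    · linarith
  obtain ⟨r, hr, hIoo⟩ := mem_nhdsGT_iff_exists_Ioo_subset.mp h4
  have hrpos : 0 < r := hr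
  have hmono : StrictMonoOn (fun s => f (L s)) (Set.Icc 0 (r/2)) := by
    apply strictMonoOn_of_deriv_pos (convex_Icc _ _)
    · exact (hfd.continuous.comp hLc).continuousOn
    · intro t ht
      rw [interior_Icc] at ht
      rw [(hφ t).deriv]
      exact hIoo ⟨ht.1, lt_trans ht.2 (by linarith)⟩
  have h5 : ∀ᶠ t in 𝓝[>] (0:ℝ), f (L t) ≤ f (L 0) := hφmax.filter_mono nhdsWithin_le_nhds
  have h6 : Set.Ioo (0:ℝ) (r/2) ∈ 𝓝[>] (0:ℝ) := Ioo_mem_nhdsGT_of_mem ⟨le_refl 0, by linarith⟩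
  obtain ⟨t, ht1, ht2⟩ := (h5.and h6).exists
  have : f (L 0) < f (L t) :=
    hmono ⟨le_refl 0, by linarith⟩ ⟨ht2.1.le, ht2.2.le⟩ ht2.1
  linarith

/-- the `k`-th column of a matrix, as a vector in `Euc d`. -/
noncomputable def colv (σm : Matrix (Fin d) (Fin d) ℝ) (k : Fin d) : Euc d :=
  ∑ j, σm j k • EuclideanSpace.single j (1:ℝ)

/-- representation of `tr(a ∇²f)` as a sum of second derivatives along the columns of `σ`. -/
lemma trace_matA_repr (σm : Matrix (Fin d) (Fin d) ℝ) (A : Euc d →L[ℝ] Euc d →L[ℝ] ℝ)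
    (H : Matrix (Fin d) (Fin d) ℝ)
    (hH : ∀ i j, H i j = A (EuclideanSpace.single i 1) (EuclideanSpace.single j 1)) :
    ((2:ℝ)⁻¹ • (σm * σm.transpose) * H).trace = 2⁻¹ * ∑ k, A (colv σm k) (colv σm k) := by
  have key : ∀ F : Fin d → Fin d → Fin d → ℝ,
      ∑ i, ∑ j, ∑ k, F i j k = ∑ k, ∑ j, ∑ i, F i j k := by
    intro F
    calc ∑ i, ∑ j, ∑ k, F i j k = ∑ j, ∑ i, ∑ k, F i j k := Finset.sum_comm
    _ = ∑ j, ∑ k, ∑ i, F i j k := Finset.sum_congr rfl fun _ _ => Finset.sum_comm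
    _ = ∑ k, ∑ j, ∑ i, F i j k := Finset.sum_comm
  have hA : ∀ k, A (colv σm k) (colv σm k)
      = ∑ j, ∑ i, σm j k * σm i k * H j i := by
    intro k
    simp only [colv, _root_.map_sum, _root_.map_smul, ContinuousLinearMap.sum_apply,
      ContinuousLinearMap.smul_apply, smul_eq_mul, hH, Finset.mul_sum]
    rw [Finset.sum_comm]
    refine Finset.sum_congr rfl fun j _ => Finset.sum_congr rfl fun i _ => by ring
  have hL : ((2:ℝ)⁻¹ • (σm * σm.transpose) * H).trace
      = ∑ i, ∑ j, ∑ k, 2⁻¹ * (σm i k * σm j k) * H j i := by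
    simp only [Matrix.trace, Matrix.diag_apply, Matrix.mul_apply, Matrix.smul_apply,
      Matrix.transpose_apply, smul_eq_mul, Finset.sum_mul, Finset.mul_sum]
  rw [hL, key (fun i j k => 2⁻¹ * (σm i k * σm j k) * H j i), Finset.mul_sum]
  refine Finset.sum_congr rfl fun k _ => ?_
  rw [hA, Finset.mul_sum]
  refine Finset.sum_congr rfl fun j _ => ?_
  rw [Finset.mul_sum]
  refine Finset.sum_congr rfl fun i _ => ?_
  ring

lemma trace_matA_eq (σ : Euc d → Matrix (Fin d) (Fin d) ℝ) (f : Euc d → ℝ) (x : Euc d) :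
    (matA σ x * hess f x).trace
      = 2⁻¹ * ∑ k, fderiv ℝ (fderiv ℝ f) x (colv (σ x) k) (colv (σ x) k) := by
  exact trace_matA_repr (σ x) _ _ (fun i j => hess_eq_fderiv_fderiv f x i j)

end AuxProof2
section AuxProof3

open RealInnerProductSpace

variable {d : ℕ}

lemma matNorm_sq_bound {σm : Matrix (Fin d) (Fin d) ℝ} {M : ℝ} (h : matNorm σm ≤ M) :
    ∑ i, ∑ j, σm i j ^ 2 ≤ M ^ 2 := by
  have h0 : (0:ℝ) ≤ ∑ i, ∑ j, σm i j ^ 2 := by positivity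
  have h1 : Real.sqrt (∑ i, ∑ j, σm i j ^ 2) ≤ M := h
  nlinarith [Real.sq_sqrt h0, Real.sqrt_nonneg (∑ i, ∑ j, σm i j ^ 2)]

lemma diag_matA (σ : Euc d → Matrix (Fin d) (Fin d) ℝ) (x : Euc d) (i : Fin d) :
    matA σ x i i = 2⁻¹ * ∑ k, σ x i k ^ 2 := by
  simp only [matA, Matrix.smul_apply, Matrix.mul_apply, Matrix.transpose_apply, smul_eq_mul, sq]

lemma scalar_key {Cell D s trA Sa B : ℝ} (hCell : 0 < Cell) (hD : 0 < D)
    (hs : 0 < s) (hs1 : s ≤ 1) (htrAB : trA + B ≤ D)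
    (hSa : Cell * (1 - s) ≤ Sa) :
    -((6 * D + 24 * Cell) ^ 2 / (96 * Cell)) * s ^ 3
      ≤ 2 * (-3 * s ^ 2) * trA + 4 * (6 * s) * Sa + 2 * (-3 * s ^ 2) * B := by
  set K : ℝ := (6 * D + 24 * Cell) ^ 2 / (96 * Cell) with hKdef
  set E : ℝ := 6 * D + 24 * Cell with hEdef
  have hK : 0 < K := by positivity
  have h96 : K * (96 * Cell) = E ^ 2 := by
    rw [hKdef, div_mul_cancel₀ _ (by positivity : (96:ℝ) * Cell ≠ 0)]
  have hks4 : 4 * K * (K * s ^ 2 - E * s + 24 * Cell) = (2 * K * s - E) ^ 2 := by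
    linear_combination h96
  have hKs : 0 ≤ K * s ^ 2 - E * s + 24 * Cell := by
    nlinarith [sq_nonneg (2 * K * s - E), hK, hks4]
  have h2 : 0 ≤ s * (K * s ^ 2 - E * s + 24 * Cell) := mul_nonneg hs.le hKs
  have h3 : 24 * s * (Cell * (1 - s)) ≤ 24 * s * Sa :=
    mul_le_mul_of_nonneg_left hSa (by positivity)
  nlinarith [h2, h3, mul_le_mul_of_nonneg_left htrAB (by positivity : (0:ℝ) ≤ 6 * s ^ 2)]

lemma chi_op_bound (σ : Euc d → Matrix (Fin d) (Fin d) ℝ) (bv : Euc d → Euc d)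
    {M C₀ Cell : ℝ}
    (hM : ∀ x, matNorm (σ x) ≤ M) (hC₀ : 0 < C₀) (hb : ∀ x, ‖bv x‖ ≤ C₀ * (1 + ‖x‖))
    (hCell : 0 < Cell)
    (hell : ∀ x (η : Euc d), Cell * ‖η‖ ^ 2 ≤ ∑ i, ∑ j, matA σ x i j * η i * η j) :
    ∃ K : ℝ, 0 < K ∧ ∀ x : Euc d,
      -K * chi x ≤ (matA σ x * hess chi x).trace + ∑ i, bv x i * gradient chi x i := by
  set D : ℝ := M ^ 2 / 2 + 2 * C₀ with hDdef
  have hD : 0 < D := by positivity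
  refine ⟨(6 * D + 24 * Cell) ^ 2 / (96 * Cell), by positivity, fun x => ?_⟩
  set s : ℝ := max (1 - qsq x) 0 with hsdef
  have hs0 : 0 ≤ s := le_max_right _ _
  have hchix : chi x = s ^ 3 := rfl
  have hg' : gcub' (qsq x) = -3 * s ^ 2 := rfl
  have hg'' : gcub'' (qsq x) = 6 * s := rfl
  have htr : (matA σ x * hess chi x).trace
      = 2 * gcub' (qsq x) * (∑ i, matA σ x i i)
        + 4 * gcub'' (qsq x) * (∑ i, ∑ j, matA σ x i j * (x j * x i)) := by
    simp only [Matrix.trace, Matrix.diag_apply, Matrix.mul_apply, hess_chi]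
    rw [Finset.mul_sum, Finset.mul_sum, ← Finset.sum_add_distrib]
    refine Finset.sum_congr rfl fun i _ => ?_
    have hsplit : ∀ j, matA σ x i j * (2 * gcub' (qsq x) * (if j = i then 1 else 0)
          + 4 * gcub'' (qsq x) * (x j * x i))
        = (if j = i then 2 * gcub' (qsq x) * matA σ x i j else 0)
          + 4 * gcub'' (qsq x) * (matA σ x i j * (x j * x i)) := by
      intro j
      by_cases h : j = i <;> simp [h] <;> ring
    rw [Finset.sum_congr rfl (fun j _ => hsplit j), Finset.sum_add_distrib,
      Finset.sum_ite_eq' Finset.univ i (fun j => 2 * gcub' (qsq x) * matA σ x i j)]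
    rw [← Finset.mul_sum]
    simp
  have hgr : ∑ i, bv x i * gradient chi x i
      = 2 * gcub' (qsq x) * (∑ i, bv x i * x i) := by
    rw [Finset.mul_sum]
    refine Finset.sum_congr rfl fun i _ => ?_
    rw [grad_chi]
    ring
  rcases eq_or_lt_of_le hs0 with hs0' | hspos
  · rw [htr, hgr, hchix, hg', hg'', ← hs0']
    norm_num
  · have hq : qsq x = 1 - s := by
      rcases max_cases (1 - qsq x) 0 with ⟨h1, _⟩ | ⟨h1, _⟩
      · rw [hsdef, h1]; ring
      · rw [hsdef, h1] at hspos; exact absurd hspos (lt_irrefl 0)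
    have hx2 : ‖x‖ ^ 2 = 1 - s := by rw [← qsq_eq_norm, hq]
    have hxn : ‖x‖ ≤ 1 := by nlinarith [norm_nonneg x]
    have hs1 : s ≤ 1 := by nlinarith [qsq_nonneg x]
    have htrA0 : (0:ℝ) ≤ ∑ i, matA σ x i i := by
      apply Finset.sum_nonneg
      intro i _
      rw [diag_matA]
      positivity
    have htrA : ∑ i, matA σ x i i ≤ M ^ 2 / 2 := by
      have h1 : ∑ i, matA σ x i i = 2⁻¹ * ∑ i, ∑ k, σ x i k ^ 2 := by
        rw [Finset.mul_sum]
        exact Finset.sum_congr rfl fun i _ => diag_matA σ x i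
      rw [h1]
      have := matNorm_sq_bound (hM x)
      linarith
    have hSa : Cell * (1 - s) ≤ ∑ i, ∑ j, matA σ x i j * (x j * x i) := by
      have h1 := hell x x
      rw [hx2] at h1
      have h2 : ∑ i, ∑ j, matA σ x i j * x i * x j
          = ∑ i, ∑ j, matA σ x i j * (x j * x i) :=
        Finset.sum_congr rfl fun i _ => Finset.sum_congr rfl fun j _ => by ring
      linarith [h2 ▸ h1]
    have hB : |∑ i, bv x i * x i| ≤ 2 * C₀ := by
      have h1 : ∑ i, bv x i * x i = ⟪bv x, x⟫ := by
        rw [PiLp.inner_apply]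
        exact Finset.sum_congr rfl fun i _ => by
          simp [RCLike.inner_apply, conj_trivial, mul_comm]
      rw [h1]
      have h2 : |(⟪bv x, x⟫:ℝ)| ≤ ‖bv x‖ * ‖x‖ := abs_real_inner_le_norm _ _
      have h3 : ‖bv x‖ ≤ C₀ * (1 + ‖x‖) := hb x
      have h4 : ‖bv x‖ * ‖x‖ ≤ C₀ * 2 * 1 := by
        have := norm_nonneg (bv x)
        have := norm_nonneg x
        nlinarith
      linarith
    rw [htr, hgr, hchix, hg', hg'']
    have hBl := abs_le.mp hB
    have htrAB : (∑ i, matA σ x i i) + (∑ i, bv x i * x i) ≤ D := by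
      rw [hDdef]
      linarith [hBl.2, htrA]
    exact scalar_key hCell hD hspos hs1 htrAB hSa

/-- the admissible set for the principal eigenvalue is bounded below. -/
lemma eig_bddBelow_of (σ : Euc d → Matrix (Fin d) (Fin d) ℝ) (bv : Euc d → Euc d)
    (cv : Euc d → ℝ)
    (hexM : ∃ M : ℝ, ∀ x, matNorm (σ x) ≤ M)
    (hexb : ∃ C₀ : ℝ, 0 < C₀ ∧ ∀ x, ‖bv x‖ ≤ C₀ * (1 + ‖x‖))
    (hA3 : HypA3 σ) (hcv : ∀ x, 0 ≤ cv x) :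
    BddBelow {l : ℝ | ∃ ψ : Euc d → ℝ, ContDiff ℝ 2 ψ ∧ (∀ x, 0 < ψ x) ∧
      ∀ x, linOp (matA σ) bv ψ x + cv x * ψ x ≤ l * ψ x} := by
  obtain ⟨M, hM⟩ := hexM
  obtain ⟨C₀, hC₀, hb⟩ := hexb
  obtain ⟨Cell, hCell, hell⟩ := hA3
  obtain ⟨K, hK, hKbound⟩ := chi_op_bound σ bv hM hC₀ hb hCell hell
  refine ⟨-K, fun l hl => ?_⟩
  obtain ⟨ψ, hψC, hψ0, hsup⟩ := hl
  have hcb : IsCompact (Metric.closedBall (0:Euc d) 1) := isCompact_closedBall _ _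
  have hne : (Metric.closedBall (0:Euc d) 1).Nonempty := ⟨0, Metric.mem_closedBall_self zero_le_one⟩
  have hcont : ContinuousOn (fun y => chi y / ψ y) (Metric.closedBall (0:Euc d) 1) :=
    (contDiff_chi.continuous.div hψC.continuous fun y => (hψ0 y).ne').continuousOn
  obtain ⟨z, hzmem, hzmax⟩ := hcb.exists_isMaxOn hne hcont
  have h0mem : (0:Euc d) ∈ Metric.closedBall (0:Euc d) 1 :=
    Metric.mem_closedBall_self zero_le_one
  have hz0 : chi (0:Euc d) / ψ 0 ≤ chi z / ψ z := hzmax h0mem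
  have hchiz : 0 < chi z := by
    have h0 : 0 < chi (0:Euc d) / ψ 0 := by
      rw [chi_zero]
      exact div_pos one_pos (hψ0 0)
    have h1 : 0 < chi z / ψ z := lt_of_lt_of_le h0 hz0
    rcases div_pos_iff.mp h1 with ⟨h, _⟩ | ⟨_, h2⟩
    · exact h
    · linarith [hψ0 z]
  set θ : ℝ := chi z / ψ z with hθdef
  have hθ : 0 < θ := div_pos hchiz (hψ0 z)
  have hθψ : θ * ψ z = chi z := div_mul_cancel₀ _ (hψ0 z).ne'
  set g₀ : Euc d → ℝ := fun y => chi y - θ * ψ y with hg₀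
  have hmax : ∀ y, g₀ y ≤ g₀ z := by
    intro y
    have hzz : g₀ z = 0 := by
      rw [hg₀]
      simp only
      rw [hθψ]
      ring
    rw [hzz, hg₀]
    simp only
    by_cases hy : y ∈ Metric.closedBall (0:Euc d) 1
    · have h1 : chi y / ψ y ≤ θ := hzmax hy
      have h2 : chi y ≤ θ * ψ y := by
        rw [div_le_iff₀ (hψ0 y)] at h1
        linarith [h1]
      linarith
    · have hy1 : 1 < ‖y‖ := by
        simp only [Metric.mem_closedBall, dist_zero_right, not_le] at hy
        exact hy
      have hchiy : chi y = 0 := by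
        have hq1 : (1:ℝ) ≤ qsq y := by
          rw [qsq_eq_norm]
          nlinarith
        show gcub (qsq y) = 0
        rw [gcub, max_eq_right (by linarith)]
        norm_num
      rw [hchiy]
      have := mul_pos hθ (hψ0 y)
      linarith
  have hloc : IsLocalMax g₀ z := Filter.Eventually.of_forall hmax
  have hg₀C : ContDiff ℝ 2 g₀ := contDiff_chi.sub (contDiff_const.mul hψC)
  have hdiffχ : Differentiable ℝ (chi (d := d)) := contDiff_chi.differentiable (by norm_num)
  have hdiffψ : Differentiable ℝ ψ := hψC.differentiable (by norm_num)
  have hfz : fderiv ℝ chi z - θ • fderiv ℝ ψ z = 0 := by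
    have h0 : fderiv ℝ g₀ z = 0 := hloc.fderiv_eq_zero
    have h1 : fderiv ℝ g₀ z = fderiv ℝ chi z - θ • fderiv ℝ ψ z := by
      rw [hg₀]
      rw [fderiv_fun_sub (hdiffχ z) ((hdiffψ z).const_mul θ), fderiv_const_mul (hdiffψ z)]
    rw [← h1, h0]
  have hgradeq : ∀ i, gradient chi z i = θ * gradient ψ z i := by
    intro i
    rw [gradient_coord (hdiffχ z).hasFDerivAt i, gradient_coord (hdiffψ z).hasFDerivAt i]
    have h2 := congrArg (fun L : Euc d →L[ℝ] ℝ => L (EuclideanSpace.single i 1)) hfz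
    simp only [ContinuousLinearMap.sub_apply, ContinuousLinearMap.smul_apply, smul_eq_mul,
      ContinuousLinearMap.zero_apply] at h2
    linarith
  have hχ1 : ContDiff ℝ 1 (fderiv ℝ (chi (d := d))) := contDiff_chi.fderiv_right (le_refl 2)
  have hψ1 : ContDiff ℝ 1 (fderiv ℝ ψ) := hψC.fderiv_right (le_refl 2)
  have hAg : fderiv ℝ (fderiv ℝ g₀) z
      = fderiv ℝ (fderiv ℝ chi) z - θ • fderiv ℝ (fderiv ℝ ψ) z := by
    have hfo : fderiv ℝ g₀ = fun y => fderiv ℝ chi y - θ • fderiv ℝ ψ y := funext fun y => by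
      rw [hg₀, fderiv_fun_sub (hdiffχ y) ((hdiffψ y).const_mul θ), fderiv_const_mul (hdiffψ y)]
    rw [hfo, show (fun y => fderiv ℝ chi y - θ • fderiv ℝ ψ y)
        = fderiv ℝ (chi (d := d)) - θ • fderiv ℝ ψ from rfl,
      fderiv_sub (hχ1.differentiable one_ne_zero z)
      ((hψ1.differentiable one_ne_zero z).const_smul θ),
      fderiv_const_smul (hψ1.differentiable one_ne_zero z)]
  have hQ : ∀ u : Euc d, fderiv ℝ (fderiv ℝ chi) z u u
      ≤ θ * fderiv ℝ (fderiv ℝ ψ) z u u := by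
    intro u
    have h := secondDeriv_nonpos hg₀C hloc u
    rw [hAg] at h
    simp only [ContinuousLinearMap.sub_apply, ContinuousLinearMap.smul_apply, smul_eq_mul] at h
    linarith
  have htrace : (matA σ z * hess chi z).trace ≤ θ * (matA σ z * hess ψ z).trace := by
    rw [trace_matA_eq, trace_matA_eq]
    have hsum : ∑ k, fderiv ℝ (fderiv ℝ chi) z (colv (σ z) k) (colv (σ z) k)
        ≤ θ * ∑ k, fderiv ℝ (fderiv ℝ ψ) z (colv (σ z) k) (colv (σ z) k) := by
      rw [Finset.mul_sum]
      exact Finset.sum_le_sum fun k _ => hQ _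
    linarith
  have hgsum : ∑ i, bv z i * gradient chi z i = θ * ∑ i, bv z i * gradient ψ z i := by
    rw [Finset.mul_sum]
    exact Finset.sum_congr rfl fun i _ => by rw [hgradeq i]; ring
  have hop := hKbound z
  have hsupz := hsup z
  simp only [linOp] at hsupz
  have hc := hcv z
  have hfinal : -K * chi z ≤ l * chi z := by
    have e1 : (matA σ z * hess chi z).trace + ∑ i, bv z i * gradient chi z i
        ≤ θ * ((matA σ z * hess ψ z).trace + ∑ i, bv z i * gradient ψ z i) := by
      rw [mul_add]
      linarith
    have e2 : θ * ((matA σ z * hess ψ z).trace + ∑ i, bv z i * gradient ψ z i)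
        ≤ θ * (l * ψ z - cv z * ψ z) := mul_le_mul_of_nonneg_left (by linarith) hθ.le
    have e3 : θ * (l * ψ z - cv z * ψ z) ≤ θ * (l * ψ z) := by
      have h5 : 0 ≤ θ * (cv z * ψ z) := mul_nonneg hθ.le (mul_nonneg hc (hψ0 z).le)
      nlinarith
    have e4 : θ * (l * ψ z) = l * chi z := by
      rw [← hθψ]
      ring
    linarith
  have := (mul_le_mul_iff_of_pos_right hchiz).mp hfinal
  exact this

end AuxProof3
theorem statement_1 {d : ℕ} {𝕌 : Type*} [MetricSpace 𝕌] [CompactSpace 𝕌]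
    [Nonempty 𝕌] [MeasurableSpace 𝕌] [BorelSpace 𝕌]
    (b : Euc d → 𝕌 → Euc d) (σ : Euc d → Matrix (Fin d) (Fin d) ℝ)
    (c : Euc d → 𝕌 → ℝ)
    (hA1 : HypA1 b σ) (hA2 : HypA2 b) (hA3 : HypA3 σ) (hA4 : HypA4 c)
    (h21 : Assumption21 b σ c)
    (v : ℕ → Euc d → 𝕌) (V : ℕ → Euc d → ℝ) (lam : ℕ → ℝ)
    (hPIA : PIAmin b σ c v V lam)
    :
    ∀ k : ℕ, 1 ≤ k → lam (k + 1) ≤ lam k := by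
  intro k _
  obtain ⟨hmeas, hEig, hImp⟩ := hPIA
  obtain ⟨hVC, hVpos, hV0, hlamk, hEigk⟩ := hEig k
  obtain ⟨_, _, _, hlamk1, _⟩ := hEig (k + 1)
  have hmem : lam k ∈ {l : ℝ | ∃ ψ : Euc d → ℝ, ContDiff ℝ 2 ψ ∧ (∀ x, 0 < ψ x) ∧
      ∀ x, linOp (matA σ) (fun y => b y (v (k+1) y)) ψ x
        + (fun y => c y (v (k+1) y)) x * ψ x ≤ lam k * ψ x} := by
    refine ⟨V k, hVC, hVpos, fun x => ?_⟩
    have h1 := hImp k x (v k x)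
    have h2 := hEigk x
    simp only [linOp, drvTerm, genAc, genA] at h1 h2 ⊢
    linarith
  have hbdd := eig_bddBelow_of σ (fun y => b y (v (k+1) y)) (fun y => c y (v (k+1) y))
    hA1.2.1
    (by obtain ⟨C₀, hC₀, hb2⟩ := hA2; exact ⟨C₀, hC₀, fun x => hb2 x (v (k+1) x)⟩)
    hA3 (fun x => h21.1 x (v (k+1) x))
  rw [hlamk1]
  exact csInf_le hbdd hmem

end RiskPIA
end
end

section
/- Let a : ℝ^d → ℝ^{d×d} be locally bounded measurable with values in the symmetric matrices and b : ℝ^d → ℝ^d locally bounded measurable, and set A u := tr(a∇²u) + b·∇u. Let V ∈ W^{2,p}_loc(ℝ^d), p > d, be positive, and define the twisted operator L̃ f := A f + 2a∇(log V)·∇f. Then for every positive φ ∈ W^{2,p}_loc(ℝ^d), the identity L̃(φ/V) = ((Aφ)/φ − (AV)/V)·(φ/V) holds a.e. in ℝ^d. -/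
open MeasureTheory Filter Topology Metric Set

noncomputable section

namespace RiskPIA

variable {d : ℕ} {𝕌 : Type*}

section AuxStatement3

variable {d : ℕ}

lemma grad_coord (f : Euc d → ℝ) (x : Euc d) (i : Fin d) :
    gradient f x i = fderiv ℝ f x (EuclideanSpace.single i 1) := by
  have h : (inner ℝ (gradient f x) (EuclideanSpace.single i (1:ℝ)) : ℝ)
      = fderiv ℝ f x (EuclideanSpace.single i 1) := by
    rw [gradient]; exact InnerProductSpace.toDual_symm_apply
  rw [EuclideanSpace.inner_single_right] at h
  simpa using h

lemma fderiv_mul_apply (f g : Euc d → ℝ) {x : Euc d}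
    (hf : DifferentiableAt ℝ f x) (hg : DifferentiableAt ℝ g x) (v : Euc d) :
    fderiv ℝ (fun y => f y * g y) x v = f x * fderiv ℝ g x v + g x * fderiv ℝ f x v := by
  rw [fderiv_fun_mul hf hg]; simp

lemma fderiv2_mul_apply (f g : Euc d → ℝ) (hf : ContDiff ℝ 2 f) (hg : ContDiff ℝ 2 g)
    (x v w : Euc d) :
    fderiv ℝ (fderiv ℝ (fun y => f y * g y)) x v w =
      f x * fderiv ℝ (fderiv ℝ g) x v w + g x * fderiv ℝ (fderiv ℝ f) x v w
      + fderiv ℝ f x v * fderiv ℝ g x w + fderiv ℝ f x w * fderiv ℝ g x v := by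
  have hfd : Differentiable ℝ f := hf.differentiable (by norm_num)
  have hgd : Differentiable ℝ g := hg.differentiable (by norm_num)
  have hdf : Differentiable ℝ (fderiv ℝ f) :=
    (hf.fderiv_right (m := 1) le_rfl).differentiable (by norm_num)
  have hdg : Differentiable ℝ (fderiv ℝ g) :=
    (hg.fderiv_right (m := 1) le_rfl).differentiable (by norm_num)
  have key : fderiv ℝ (fun y => f y * g y)
      = fun y => f y • fderiv ℝ g y + g y • fderiv ℝ f y := by
    funext y; rw [fderiv_fun_mul (hfd y) (hgd y)]
  rw [key]
  have h1 : HasFDerivAt (fun y => f y • fderiv ℝ g y)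
      (f x • fderiv ℝ (fderiv ℝ g) x + (fderiv ℝ f x).smulRight (fderiv ℝ g x)) x :=
    (hfd x).hasFDerivAt.smul (hdg x).hasFDerivAt
  have h2 : HasFDerivAt (fun y => g y • fderiv ℝ f y)
      (g x • fderiv ℝ (fderiv ℝ f) x + (fderiv ℝ g x).smulRight (fderiv ℝ f x)) x :=
    (hgd x).hasFDerivAt.smul (hdf x).hasFDerivAt
  rw [HasFDerivAt.fderiv (f := fun y => f y • fderiv ℝ g y + g y • fderiv ℝ f y) (h1.add h2)]
  simp [ContinuousLinearMap.smul_apply, ContinuousLinearMap.smulRight_apply, smul_eq_mul]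
  ring

lemma fderiv_log_apply (V : Euc d → ℝ) {x : Euc d} (hV : DifferentiableAt ℝ V x)
    (hVx : V x ≠ 0) (v : Euc d) :
    fderiv ℝ (fun y => Real.log (V y)) x v = fderiv ℝ V x v / V x := by
  have h : HasFDerivAt (fun y => Real.log (V y)) ((V x)⁻¹ • fderiv ℝ V x) x :=
    (Real.hasDerivAt_log hVx).comp_hasFDerivAt x hV.hasFDerivAt
  rw [h.fderiv]
  simp [div_eq_inv_mul]

lemma linOp_expand (a : Euc d → Matrix (Fin d) (Fin d) ℝ) (bv : Euc d → Euc d)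
    (f : Euc d → ℝ) (x : Euc d) :
    linOp a bv f x = (∑ i, ∑ j, a x i j *
        fderiv ℝ (fderiv ℝ f) x (EuclideanSpace.single j 1) (EuclideanSpace.single i 1)) +
      ∑ i, bv x i * fderiv ℝ f x (EuclideanSpace.single i 1) := by
  rw [linOp]
  congr 1
  · rw [Matrix.trace]
    refine Finset.sum_congr rfl fun i _ => ?_
    rw [Matrix.diag_apply, Matrix.mul_apply]
    refine Finset.sum_congr rfl fun j _ => ?_
    rw [hess, Matrix.of_apply, iteratedFDeriv_two_apply]
    simp
  · exact Finset.sum_congr rfl fun i _ => by rw [grad_coord]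

lemma twist_coord (a : Euc d → Matrix (Fin d) (Fin d) ℝ) (bv : Euc d → Euc d)
    (V : Euc d → ℝ) (hV : Differentiable ℝ V) (hVne : ∀ y, V y ≠ 0) (x : Euc d) (i : Fin d) :
    twistDrift a bv V x i = bv x i +
      2 * ∑ j, a x i j * (fderiv ℝ V x (EuclideanSpace.single j 1) / V x) := by
  have hlog : ∀ j : Fin d, gradient (fun y => Real.log (V y)) x j
      = fderiv ℝ V x (EuclideanSpace.single j 1) / V x := by
    intro j
    rw [grad_coord, fderiv_log_apply V (hV x) (hVne x)]
  simp only [twistDrift, PiLp.add_apply, PiLp.smul_apply, smul_eq_mul]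
  congr 1
  simp [Matrix.mulVec, dotProduct, hlog, Finset.mul_sum]

end AuxStatement3

theorem statement_3 {d : ℕ}
    (a : Euc d → Matrix (Fin d) (Fin d) ℝ) (bv : Euc d → Euc d)
    (hsymm : ∀ x, (a x).IsSymm) (hameas : ∀ i j, Measurable fun x => a x i j) (hbmeas : Measurable bv)
    (hloc : ∀ R : ℝ, 0 < R → ∃ M : ℝ, ∀ x ∈ ball (0 : Euc d) R,
      matNorm (a x) ≤ M ∧ ‖bv x‖ ≤ M)
    (V φ : Euc d → ℝ)
    (hV : ContDiff ℝ 2 V) (hVpos : ∀ x, 0 < V x)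
    (hφ : ContDiff ℝ 2 φ) (hφpos : ∀ x, 0 < φ x) :
    ∀ᵐ x ∂(volume : Measure (Euc d)),
      linOp a (twistDrift a bv V) (fun y => φ y / V y) x =
        (linOp a bv φ x / φ x - linOp a bv V x / V x) * (φ x / V x) := by
  refine Eventually.of_forall fun x => ?_
  have hVne : ∀ y, V y ≠ 0 := fun y => (hVpos y).ne'
  have hu : ContDiff ℝ 2 fun y => φ y / V y := hφ.div hV hVne
  obtain ⟨u, hu_def⟩ : ∃ u : Euc d → ℝ, u = fun y => φ y / V y := ⟨_, rfl⟩
  rw [← hu_def] at hu ⊢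
  have hφeq : φ = fun y => u y * V y := by
    funext y
    simp only [hu_def]
    exact (div_mul_cancel₀ _ (hVne y)).symm
  have hud : Differentiable ℝ u := hu.differentiable (by norm_num)
  have hVd : Differentiable ℝ V := hV.differentiable (by norm_num)
  rw [linOp_expand, linOp_expand, linOp_expand]
  have hC : (∑ i, ∑ j, a x i j * (fderiv ℝ u x (EuclideanSpace.single j 1)
          * fderiv ℝ V x (EuclideanSpace.single i 1)))
      = ∑ i, ∑ j, a x i j * (fderiv ℝ u x (EuclideanSpace.single i 1)
          * fderiv ℝ V x (EuclideanSpace.single j 1)) := by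
    rw [Finset.sum_comm]
    exact Finset.sum_congr rfl fun i _ => Finset.sum_congr rfl fun j _ => by
      rw [(hsymm x).apply i j]
  have hTφ : (∑ i, ∑ j, a x i j *
        fderiv ℝ (fderiv ℝ φ) x (EuclideanSpace.single j 1) (EuclideanSpace.single i 1))
      = u x * (∑ i, ∑ j, a x i j *
            fderiv ℝ (fderiv ℝ V) x (EuclideanSpace.single j 1) (EuclideanSpace.single i 1))
        + V x * (∑ i, ∑ j, a x i j *
            fderiv ℝ (fderiv ℝ u) x (EuclideanSpace.single j 1) (EuclideanSpace.single i 1))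
        + 2 * ∑ i, ∑ j, a x i j * (fderiv ℝ u x (EuclideanSpace.single i 1)
            * fderiv ℝ V x (EuclideanSpace.single j 1)) := by
    have step : ∀ i j : Fin d, a x i j *
        fderiv ℝ (fderiv ℝ φ) x (EuclideanSpace.single j 1) (EuclideanSpace.single i 1)
        = u x * (a x i j * fderiv ℝ (fderiv ℝ V) x (EuclideanSpace.single j 1)
              (EuclideanSpace.single i 1))
          + V x * (a x i j * fderiv ℝ (fderiv ℝ u) x (EuclideanSpace.single j 1)
              (EuclideanSpace.single i 1))
          + a x i j * (fderiv ℝ u x (EuclideanSpace.single j 1)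
              * fderiv ℝ V x (EuclideanSpace.single i 1))
          + a x i j * (fderiv ℝ u x (EuclideanSpace.single i 1)
              * fderiv ℝ V x (EuclideanSpace.single j 1)) := by
      intro i j
      conv_lhs => rw [hφeq]
      rw [fderiv2_mul_apply u V hu hV]
      ring
    rw [show (∑ i, ∑ j, a x i j *
        fderiv ℝ (fderiv ℝ φ) x (EuclideanSpace.single j 1) (EuclideanSpace.single i 1))
        = ∑ i, ∑ j, (u x * (a x i j * fderiv ℝ (fderiv ℝ V) x (EuclideanSpace.single j 1)
              (EuclideanSpace.single i 1))
          + V x * (a x i j * fderiv ℝ (fderiv ℝ u) x (EuclideanSpace.single j 1)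
              (EuclideanSpace.single i 1))
          + a x i j * (fderiv ℝ u x (EuclideanSpace.single j 1)
              * fderiv ℝ V x (EuclideanSpace.single i 1))
          + a x i j * (fderiv ℝ u x (EuclideanSpace.single i 1)
              * fderiv ℝ V x (EuclideanSpace.single j 1))) from
      Finset.sum_congr rfl fun i _ => Finset.sum_congr rfl fun j _ => step i j]
    simp only [Finset.sum_add_distrib, ← Finset.mul_sum]
    rw [hC]
    ring
  have hgφ : ∀ v : Euc d, fderiv ℝ φ x v
      = u x * fderiv ℝ V x v + V x * fderiv ℝ u x v := by
    intro v
    conv_lhs => rw [hφeq]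
    exact fderiv_mul_apply u V (hud x) (hVd x) v
  have hBφ : (∑ i, bv x i * fderiv ℝ φ x (EuclideanSpace.single i 1))
      = u x * (∑ i, bv x i * fderiv ℝ V x (EuclideanSpace.single i 1))
        + V x * (∑ i, bv x i * fderiv ℝ u x (EuclideanSpace.single i 1)) := by
    rw [show (∑ i, bv x i * fderiv ℝ φ x (EuclideanSpace.single i 1))
        = ∑ i, (u x * (bv x i * fderiv ℝ V x (EuclideanSpace.single i 1))
            + V x * (bv x i * fderiv ℝ u x (EuclideanSpace.single i 1))) from
      Finset.sum_congr rfl fun i _ => by rw [hgφ]; ring]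
    simp only [Finset.sum_add_distrib, ← Finset.mul_sum]
  have htwist : (∑ i, twistDrift a bv V x i * fderiv ℝ u x (EuclideanSpace.single i 1))
      = (∑ i, bv x i * fderiv ℝ u x (EuclideanSpace.single i 1))
        + 2 / V x * ∑ i, ∑ j, a x i j * (fderiv ℝ u x (EuclideanSpace.single i 1)
            * fderiv ℝ V x (EuclideanSpace.single j 1)) := by
    rw [show (∑ i, twistDrift a bv V x i * fderiv ℝ u x (EuclideanSpace.single i 1))
        = ∑ i, (bv x i * fderiv ℝ u x (EuclideanSpace.single i 1)
            + 2 / V x * ∑ j, a x i j * (fderiv ℝ u x (EuclideanSpace.single i 1)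
                * fderiv ℝ V x (EuclideanSpace.single j 1))) from
      Finset.sum_congr rfl fun i _ => by
        rw [twist_coord a bv V hVd hVne x i]
        have hs : (∑ j, a x i j * (fderiv ℝ u x (EuclideanSpace.single i 1)
              * fderiv ℝ V x (EuclideanSpace.single j 1)))
            = (∑ j, a x i j * (fderiv ℝ V x (EuclideanSpace.single j 1) / V x))
              * (V x * fderiv ℝ u x (EuclideanSpace.single i 1)) := by
          rw [Finset.sum_mul]
          refine Finset.sum_congr rfl fun j _ => ?_
          field_simp [hVne x]
        rw [hs]
        field_simp [hVne x]]
    simp only [Finset.sum_add_distrib, ← Finset.mul_sum]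
  have hφx : φ x = u x * V x := by rw [hφeq]
  have hux : u x ≠ 0 := by
    simp only [hu_def]
    exact (div_pos (hφpos x) (hVpos x)).ne'
  rw [hTφ, hBφ, htwist, hφx]
  field_simp [hVne x, hux]
  ring


end RiskPIA
end
end
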